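/- For a chain of ℓ+1 qubits q₀,...,q_ℓ with ℓ even, the following sequence of operations produces the Bell state (|00⟩+|11⟩)/√2 on (q₀,q_ℓ) tensored with a product state on the intermediate qubits (after the appropriate measurement and correction): prepare q_j in |+⟩ for j even and |0⟩ for j odd; apply CNOT from q_j to q_{j−1} for each even j > 0 and CNOT from q_j to q_{j+1} for each even j < ℓ. Then before any measurement, the total state equals (1/√(2^{ℓ/2+1})) ∑_{x₀,x₂,...,x_ℓ ∈ ℤ₂} |x₀⟩|x₀⊕x₂⟩|x₂⟩|x₂⊕x₄⟩⋯|x_ℓ⟩. -/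
import Mathlib


/-- The standard basis vector of an `n`-qubit register, indexed by a bit string. -/
noncomputable def kets (n : ℕ) (v : Fin n → ZMod 2) : (Fin n → ZMod 2) → ℂ := Pi.single v 1

/-- The CNOT gate with control `ctl` and target `tgt`, acting on `n`-qubit amplitude
vectors: on basis states, `|v⟩ ↦ |v with v tgt replaced by v tgt + v ctl⟩`. -/
noncomputable def cnot (n : ℕ) (ctl tgt : Fin n) (ψ : (Fin n → ZMod 2) → ℂ) :
    (Fin n → ZMod 2) → ℂ :=
  fun v => ψ (Function.update v tgt (v tgt + v ctl))

/-- string-level action of a gate -/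
def gstep (n : ℕ) (v : Fin n → ZMod 2) (pq : Fin n × Fin n) : Fin n → ZMod 2 :=
  Function.update v pq.2 (v pq.2 + v pq.1)

lemma gstep_invol (n : ℕ) (c t : Fin n) (h : c ≠ t) (v : Fin n → ZMod 2) :
    gstep n (gstep n v (c, t)) (c, t) = v := by
  unfold gstep
  funext j
  by_cases hj : j = t
  · subst hj
    simp only [Function.update_self, Function.update_apply, if_neg h]
    rw [add_assoc, CharTwo.add_self_eq_zero, add_zero]
  · simp [Function.update_apply, hj]

lemma cnot_kets (n : ℕ) (c t : Fin n) (h : c ≠ t) (v : Fin n → ZMod 2) :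
    cnot n c t (kets n v) = kets n (gstep n v (c, t)) := by
  funext w
  simp only [cnot, kets, Pi.single_apply]
  congr 1
  simp only [eq_iff_iff]
  constructor
  · rintro rfl
    exact (gstep_invol n c t h w).symm
  · rintro rfl
    exact gstep_invol n c t h v

lemma cnot_smul_sum {ι : Type*} [Fintype ι] (n : ℕ) (c t : Fin n) (a : ℂ)
    (g : ι → ((Fin n → ZMod 2) → ℂ)) :
    cnot n c t (a • ∑ x, g x) = a • ∑ x, cnot n c t (g x) := by
  funext w
  simp [cnot, Finset.sum_apply]

lemma foldl_cnot {ι : Type*} [Fintype ι] (n : ℕ) (L : List (Fin n × Fin n))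
    (hL : ∀ p ∈ L, p.1 ≠ p.2) (a : ℂ) (f : ι → (Fin n → ZMod 2)) :
    L.foldl (fun ψ pq => cnot n pq.1 pq.2 ψ) (a • ∑ x, kets n (f x))
      = a • ∑ x, kets n (L.foldl (gstep n) (f x)) := by
  induction L generalizing f with
  | nil => rfl
  | cons p L ih =>
    simp only [List.foldl_cons]
    rw [cnot_smul_sum]
    have h1 : ∀ x : ι, cnot n p.1 p.2 (kets n (f x)) = kets n (gstep n (f x) p) := by
      intro x
      rw [cnot_kets n p.1 p.2 (hL p (by simp)) (f x)]
    simp only [h1]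
    exact ih (fun q hq => hL q (by simp [hq])) (fun x => gstep n (f x) p)

lemma foldl_gstep (n : ℕ) (L : List (Fin n × Fin n))
    (h : ∀ p ∈ L, ∀ q ∈ L, p.1 ≠ q.2) (v : Fin n → ZMod 2) :
    L.foldl (gstep n) v
      = fun j => v j + (L.map (fun p => if p.2 = j then v p.1 else 0)).sum := by
  induction L generalizing v with
  | nil => simp
  | cons p L ih =>
    simp only [List.foldl_cons, List.map_cons, List.sum_cons]
    rw [ih (fun a ha b hb => h a (List.mem_cons_of_mem _ ha) b (List.mem_cons_of_mem _ hb)) (gstep n v p)]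
    funext j
    have hmap : (L.map fun q => if q.2 = j then gstep n v p q.1 else 0)
        = L.map fun q => if q.2 = j then v q.1 else 0 := by
      apply List.map_congr_left
      intro q hq
      have hne : q.1 ≠ p.2 := h q (by simp [hq]) p (by simp)
      simp [gstep, Function.update_apply, hne]
    rw [hmap]
    by_cases hj : j = p.2
    · subst hj
      simp [gstep]
      ring
    · simp [gstep, Function.update_apply, hj, Ne.symm hj]

/-- Initial basis string for the chain: entry `x (j/2)` at even positions `j`, `0` at odd. -/
def chainInit (m : ℕ) (x : Fin (m + 1) → ZMod 2) : Fin (2 * m + 1) → ZMod 2 :=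
  fun j => if (j : ℕ) % 2 = 0 then x ⟨(j : ℕ) / 2, by have := j.isLt; omega⟩ else 0

/-- Final basis string for the chain: `x (j/2)` at even positions, `x (j/2) ⊕ x (j/2 + 1)`
at odd positions. -/
def chainFinal (m : ℕ) (x : Fin (m + 1) → ZMod 2) : Fin (2 * m + 1) → ZMod 2 :=
  fun j =>
    if h : (j : ℕ) % 2 = 0 then x ⟨(j : ℕ) / 2, by have := j.isLt; omega⟩
    else x ⟨(j : ℕ) / 2, by have := j.isLt; omega⟩ +
         x ⟨(j : ℕ) / 2 + 1, by have := j.isLt; omega⟩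

/-- The CNOT gates of the chain protocol: from `q_j` to `q_{j-1}` for each even `j > 0`,
then from `q_j` to `q_{j+1}` for each even `j < ℓ` (with `ℓ = 2m`). -/
def chainGates (m : ℕ) : List (Fin (2 * m + 1) × Fin (2 * m + 1)) :=
  ((List.finRange m).map (fun (i : Fin m) =>
      ((⟨2 * (i : ℕ) + 2, by have := i.isLt; omega⟩ : Fin (2 * m + 1)),
       (⟨2 * (i : ℕ) + 1, by have := i.isLt; omega⟩ : Fin (2 * m + 1)))))
    ++ ((List.finRange m).map (fun (i : Fin m) =>
      ((⟨2 * (i : ℕ), by have := i.isLt; omega⟩ : Fin (2 * m + 1)),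
       (⟨2 * (i : ℕ) + 1, by have := i.isLt; omega⟩ : Fin (2 * m + 1)))))


lemma chainInit_even (m : ℕ) (x : Fin (m + 1) → ZMod 2) (i : ℕ) (h : i < m + 1)
    (h2 : 2 * i < 2 * m + 1) : chainInit m x ⟨2 * i, h2⟩ = x ⟨i, h⟩ := by
  simp only [chainInit]
  rw [if_pos (by omega)]
  congr 1
  exact Fin.ext (by simp)

lemma chainInit_odd (m : ℕ) (x : Fin (m + 1) → ZMod 2) (i : ℕ)
    (h : 2 * i + 1 < 2 * m + 1) : chainInit m x ⟨2 * i + 1, h⟩ = 0 := by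
  simp only [chainInit]
  rw [if_neg (by omega)]

/-- For a chain of `ℓ+1 = 2m+1` qubits (`ℓ = 2m` even): prepare `q_j` in `|+⟩`
for `j` even and `|0⟩` for `j` odd, apply CNOT from `q_j` to `q_{j−1}` for each even
`j > 0`, and CNOT from `q_j` to `q_{j+1}` for each even `j < ℓ`.  Then the resulting
(pre-measurement) state equals
`(1/√(2^{m+1})) ∑_{x₀,x₂,…,x_ℓ} |x₀⟩|x₀⊕x₂⟩|x₂⟩|x₂⊕x₄⟩⋯|x_ℓ⟩`. -/
theorem stmt8 (m : ℕ) :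
    (chainGates m).foldl (fun ψ pq => cnot (2 * m + 1) pq.1 pq.2 ψ)
      (((1 / Real.sqrt (2 ^ (m + 1)) : ℝ) : ℂ) •
        ∑ x : Fin (m + 1) → ZMod 2, kets (2 * m + 1) (chainInit m x))
    = ((1 / Real.sqrt (2 ^ (m + 1)) : ℝ) : ℂ) •
        ∑ x : Fin (m + 1) → ZMod 2, kets (2 * m + 1) (chainFinal m x) := by
  have hval : ∀ p ∈ chainGates m, ∃ i : ℕ, i < m ∧
      ((p.1 : ℕ) = 2 * i + 2 ∨ (p.1 : ℕ) = 2 * i) ∧ (p.2 : ℕ) = 2 * i + 1 := by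
    intro p hp
    simp only [chainGates, List.mem_append, List.mem_map, List.mem_finRange, true_and] at hp
    rcases hp with ⟨i, rfl⟩ | ⟨i, rfl⟩
    · exact ⟨i, i.isLt, Or.inl rfl, rfl⟩
    · exact ⟨i, i.isLt, Or.inr rfl, rfl⟩
  have hL : ∀ p ∈ chainGates m, p.1 ≠ p.2 := by
    intro p hp heq
    obtain ⟨i, _, h1, h2⟩ := hval p hp
    have := congrArg Fin.val heq
    omega
  have hdisj : ∀ p ∈ chainGates m, ∀ q ∈ chainGates m, p.1 ≠ q.2 := by
    intro p hp q hq heq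
    obtain ⟨i, _, h1, h2⟩ := hval p hp
    obtain ⟨i', _, _, h2'⟩ := hval q hq
    have := congrArg Fin.val heq
    omega
  rw [foldl_cnot _ _ hL]
  congr 1
  refine Finset.sum_congr rfl fun x _ => ?_
  refine congrArg (kets (2 * m + 1)) ?_
  rw [foldl_gstep _ _ hdisj]
  funext j
  simp only [chainGates, List.map_append, List.map_map, List.sum_append,
    ← Fin.sum_univ_def, Function.comp]
  by_cases hj : (j : ℕ) % 2 = 0
  · have hz1 : (∑ i : Fin m, if (⟨2 * (i : ℕ) + 1, by have := i.isLt; omega⟩ :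
        Fin (2 * m + 1)) = j then
        chainInit m x ⟨2 * (i : ℕ) + 2, by have := i.isLt; omega⟩ else 0) = 0 :=
      Finset.sum_eq_zero fun i _ => if_neg (by
        intro h
        have := congrArg Fin.val h
        simp only [] at this
        omega)
    have hz2 : (∑ i : Fin m, if (⟨2 * (i : ℕ) + 1, by have := i.isLt; omega⟩ :
        Fin (2 * m + 1)) = j then
        chainInit m x ⟨2 * (i : ℕ), by have := i.isLt; omega⟩ else 0) = 0 :=
      Finset.sum_eq_zero fun i _ => if_neg (by
        intro h
        have := congrArg Fin.val h
        simp only [] at this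
        omega)
    rw [hz1, hz2]
    simp only [chainInit, chainFinal, if_pos hj, dif_pos hj, add_zero]
  · -- odd case
    have hjlt := j.isLt
    have hm : (j : ℕ) / 2 < m := by omega
    set i0 : Fin m := ⟨(j : ℕ) / 2, hm⟩ with hi0
    have hjval : (j : ℕ) = 2 * (i0 : ℕ) + 1 := by show (j : ℕ) = 2 * ((j : ℕ) / 2) + 1; omega
    have hs1 : (∑ i : Fin m, if (⟨2 * (i : ℕ) + 1, by have := i.isLt; omega⟩ :
        Fin (2 * m + 1)) = j then
        chainInit m x ⟨2 * (i : ℕ) + 2, by have := i.isLt; omega⟩ else 0)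
        = x ⟨(j : ℕ) / 2 + 1, by omega⟩ := by
      rw [Finset.sum_eq_single i0]
      · rw [if_pos (Fin.ext (show 2 * (i0 : ℕ) + 1 = (j : ℕ) by omega))]
        have : (2 : ℕ) * (i0 : ℕ) + 2 = 2 * ((i0 : ℕ) + 1) := by ring
        rw [show (⟨2 * (i0 : ℕ) + 2, by have := i0.isLt; omega⟩ : Fin (2 * m + 1)) =
          ⟨2 * ((i0 : ℕ) + 1), by have := i0.isLt; omega⟩ from Fin.ext (by simp; omega)]
        rw [chainInit_even m x ((i0 : ℕ) + 1) (by have := i0.isLt; omega)]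
      · intro i _ hne
        refine if_neg ?_
        intro h
        have := congrArg Fin.val h
        simp only [] at this
        exact hne (Fin.ext (show (i : ℕ) = (j : ℕ) / 2 by omega))
      · intro h
        exact absurd (Finset.mem_univ i0) h
    have hs2 : (∑ i : Fin m, if (⟨2 * (i : ℕ) + 1, by have := i.isLt; omega⟩ :
        Fin (2 * m + 1)) = j then
        chainInit m x ⟨2 * (i : ℕ), by have := i.isLt; omega⟩ else 0)
        = x ⟨(j : ℕ) / 2, by omega⟩ := by
      rw [Finset.sum_eq_single i0]
      · rw [if_pos (Fin.ext (show 2 * (i0 : ℕ) + 1 = (j : ℕ) by omega))]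
        rw [chainInit_even m x (i0 : ℕ) (by have := i0.isLt; omega)]
      · intro i _ hne
        refine if_neg ?_
        intro h
        have := congrArg Fin.val h
        simp only [] at this
        exact hne (Fin.ext (show (i : ℕ) = (j : ℕ) / 2 by omega))
      · intro h
        exact absurd (Finset.mem_univ i0) h
    rw [hs1, hs2]
    have hv : chainInit m x j = 0 := by
      rw [show j = ⟨2 * (i0 : ℕ) + 1, by have := i0.isLt; omega⟩ from Fin.ext hjval]
      exact chainInit_odd m x (i0 : ℕ) (by have := i0.isLt; omega)
    rw [hv, zero_add]
    simp only [chainFinal, dif_neg hj]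
    rw [add_comm]
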